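/- There exist explicitly computable positive constants a and b such that for all sufficiently large real x, a·x/log x < π(x) < b·x/log x. -/

import Mathlib

/-!
Both bounds are read off Mathlib's Chebyshev estimates. Above, `π(x) ≤ (log 4 + ε) x / log x`
eventually, from `θ(x) ≤ x log 4` and partial summation. Below,
`π(x) log x ≥ ψ(x) ≥ (x - 1) log 2 - log (x + 2)`, from `2ⁿ ≤ (n + 1) lcm(1, …, n)`;
since `log (x + 2) = o(x)`, any constant `a < log 2` works eventually.
-/

noncomputable def primePi (x : ℝ) : ℝ := Nat.primeCounting ⌊x⌋₊

open Real Filter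

theorem eventually_log_le_mul {c : ℝ} (hc : 0 < c) : ∀ᶠ x in atTop, log x ≤ c * x := by
  filter_upwards [isLittleO_log_id_atTop.bound hc, eventually_ge_atTop 0] with x hx hx0
  simpa [norm_eq_abs, abs_of_nonneg hx0] using (le_abs_self (log x)).trans hx

theorem eventually_primeCounting_lt_mul_div_log {b : ℝ} (hb : log 4 < b) :
    ∀ᶠ x in atTop, (Nat.primeCounting ⌊x⌋₊ : ℝ) < b * x / log x := by
  have hε : 0 < (b - log 4) / 2 := by linarith
  filter_upwards [Chebyshev.eventually_primeCounting_le hε, eventually_gt_atTop 1] with x hπ hx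
  refine hπ.trans_lt ?_
  have := log_pos hx
  gcongr
  linarith

theorem eventually_mul_div_log_lt_primeCounting {a : ℝ} (ha : a < log 2) :
    ∀ᶠ x in atTop, a * x / log x < Nat.primeCounting ⌊x⌋₊ := by
  set c := (log 2 - a) / 2
  have hc : 0 < c := by positivity
  filter_upwards [eventually_log_le_mul hc, eventually_gt_atTop (2 * log 2 / c),
    eventually_ge_atTop 2] with x hlogx hx hx2
  have hlog : 0 < log x := log_pos (by linarith)
  have hlog_add_two : log (x + 2) ≤ log 2 + log x := by
    rw [← log_mul two_ne_zero (by positivity)]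
    exact log_le_log (by positivity) (by linarith)
  have hcx : 2 * log 2 < c * x := (div_lt_iff₀' hc).1 hx
  have hc_mul : (log 2 - a) * x = 2 * (c * x) := by ring
  refine lt_of_lt_of_le ?_ (Chebyshev.pi_ge' (by linarith))
  gcongr
  linarith

theorem chebyshev_bounds :
    ∃ a b : ℝ, 0 < a ∧ 0 < b ∧
      ∀ᶠ x : ℝ in Filter.atTop,
        a * x / Real.log x < primePi x ∧ primePi x < b * x / Real.log x := by
  refine ⟨log 2 / 2, log 4 + 1, by positivity, by positivity, ?_⟩
  filter_upwards [eventually_mul_div_log_lt_primeCounting (half_lt_self (log_pos one_lt_two)),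
    eventually_primeCounting_lt_mul_div_log (lt_add_one _)] with x hlower hupper
  exact ⟨hlower, hupper⟩
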